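/- Let Δ ⊂ ℝ² be a smooth polygon, and let B, C be adjacent vertices joined by an edge ε of affine length d. Choose coordinates so B = (0,0), C = (d,0), the edge BA at B has direction (0,1), and the outward normal of the edge CD at C is (1, −(1+2k)) for some integer k ≥ 0. Assume ε is short: its affine length d is at most half the affine length of each of its neighbors AB and CD. Then the point P, the midpoint of the segment {y = d} ∩ {x between the lines AB and CD}, is not displaceable by any probe: every probe through P either starts at a vertex, or P lies at least half way along it. -/

import Mathlib

open Finset

/-- Dot product of an integral vector with a real vector. -/
def dotz {n : ℕ} (a : Fin n → ℤ) (x : Fin n → ℝ) : ℝ := ∑ i, (a i : ℝ) * x i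

/-- `x` is a lattice point. -/
def IsLatticePt {n : ℕ} (x : Fin n → ℝ) : Prop := ∀ i, ∃ z : ℤ, x i = (z : ℝ)

/-- A nonzero integral vector is primitive. -/
def IsPrimitiveZ {n : ℕ} (a : Fin n → ℤ) : Prop :=
  a ≠ 0 ∧ ∀ d : ℤ, (∀ i, d ∣ a i) → IsUnit d

/-- `v` is a vertex (extreme point) of `Δ`. -/
def IsVertex {n : ℕ} (Δ : Set (Fin n → ℝ)) (v : Fin n → ℝ) : Prop :=
  v ∈ Δ ∧ IsExtreme ℝ Δ {v}

/-- `e` points from the vertex `v` along an edge of `Δ`. -/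
def IsEdgeDir {n : ℕ} (Δ : Set (Fin n → ℝ)) (v e : Fin n → ℝ) : Prop :=
  ∃ t : ℝ, 0 < t ∧ IsExtreme ℝ Δ (segment ℝ v (v + t • e))

/-- `u` is displaceable by a probe of the polygon `Δ`: there is an edge (a
one-dimensional face `segment p q` lying on a supporting line with primitive integral
outward normal `η`), a point `w` in the relative interior of the edge, and a primitive
integral direction `l` integrally transverse to the edge, with `u = w + t·l` at affine
distance `t` from `w` less than half the affine length of the probe. -/
def DisplaceableByProbe (Δ : Set (Fin 2 → ℝ)) (u : Fin 2 → ℝ) : Prop :=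
  ∃ (p q : Fin 2 → ℝ) (η : Fin 2 → ℤ) (κ : ℝ),
    p ≠ q ∧ IsExtreme ℝ Δ (segment ℝ p q) ∧ segment ℝ p q ⊆ Δ ∧
    IsPrimitiveZ η ∧ (∀ x ∈ Δ, dotz η x ≤ κ) ∧ (∀ x ∈ segment ℝ p q, dotz η x = κ) ∧
    ∃ w ∈ openSegment ℝ p q, ∃ l : Fin 2 → ℤ, IsPrimitiveZ l ∧ |∑ i, l i * η i| = 1 ∧
      ∃ t : ℝ, 0 < t ∧ u = w + t • (fun i => (l i : ℝ)) ∧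
        2 * t < sSup {s : ℝ | 0 ≤ s ∧ w + s • (fun i => (l i : ℝ)) ∈ Δ}

lemma ext2' {x y : Fin 2 → ℝ} (h0 : x 0 = y 0) (h1 : x 1 = y 1) : x = y := by
  funext i; fin_cases i <;> assumption

set_option maxHeartbeats 2000000 in
/-- near a short odd edge of a smooth polygon there is a nondisplaceable
point: with `B = (0,0)`, `C = (d,0)`, edge `AB` on `{x = 0}`, edge `CD` with outward
normal `(1, -(1+2k))`, and `ε = BC` short, the point `P = (d(k+1), d)` is not
displaceable by any probe. -/
theorem short_odd_edge_nondisplaceable_point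
    (V : Finset (Fin 2 → ℝ)) (hVlat : ∀ v ∈ V, IsLatticePt v)
    (Δ : Set (Fin 2 → ℝ)) (hΔ : Δ = convexHull ℝ (V : Set (Fin 2 → ℝ)))
    -- `Δ` is a smooth polygon
    (hsmooth : ∀ v, IsVertex Δ v → ∃ e : Fin 2 → (Fin 2 → ℝ), Function.Injective e ∧
      (∀ i, (∃ b : Fin 2 → ℤ, IsPrimitiveZ b ∧ e i = fun j => (b j : ℝ)) ∧
        IsEdgeDir Δ v (e i)) ∧
      (∀ z : Fin 2 → ℤ, ∃ c : Fin 2 → ℤ, (fun j => (z j : ℝ)) = ∑ i, (c i : ℝ) • e i))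
    (d : ℤ) (hd : 0 < d) (k : ℕ)
    -- the supporting half-planes of the edges `AB`, `BC`, `CD`
    (hAB : ∀ x ∈ Δ, 0 ≤ x 0)
    (hBC : ∀ x ∈ Δ, 0 ≤ x 1)
    (hCD : ∀ x ∈ Δ, x 0 - (1 + 2 * (k : ℝ)) * x 1 ≤ (d : ℝ))
    -- the vertices `B`, `C` and the edge `ε = BC` of affine length `d`
    (hB : IsVertex Δ ![0, 0]) (hC : IsVertex Δ ![(d : ℝ), 0])
    (hedgeBC : IsExtreme ℝ Δ (segment ℝ ![0, 0] ![(d : ℝ), 0]))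
    -- `ε` is short: its neighbours `AB` and `CD` have affine length at least `2d`:
    -- `A = (0, a)` with `a ≥ 2d`, and `D = C + L·(1+2k, 1)` with `L ≥ 2d`
    (a : ℤ) (ha : 2 * d ≤ a) (hA : IsVertex Δ ![0, (a : ℝ)])
    (hedgeAB : IsExtreme ℝ Δ (segment ℝ ![0, (a : ℝ)] ![0, 0]))
    (L : ℤ) (hL : 2 * d ≤ L)
    (hD : IsVertex Δ ![(d : ℝ) + (L : ℝ) * (1 + 2 * (k : ℝ)), (L : ℝ)])
    (hedgeCD : IsExtreme ℝ Δ
      (segment ℝ ![(d : ℝ), 0] ![(d : ℝ) + (L : ℝ) * (1 + 2 * (k : ℝ)), (L : ℝ)])) :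
    ¬ DisplaceableByProbe Δ ![(d : ℝ) * ((k : ℝ) + 1), (d : ℝ)] := by
  rintro ⟨p₀, q₀, η, κ, hpq, hext, hsub, hηprim, hκub, hκeq, w, hw, l, hlprim, hlη, t, ht,
    hu, hsup⟩
  clear hsmooth hVlat hedgeAB hedgeBC hedgeCD
  have hΔconv : Convex ℝ Δ := hΔ ▸ convex_convexHull ℝ _
  have hp₀Δ : p₀ ∈ Δ := hsub (left_mem_segment ℝ p₀ q₀)
  have hq₀Δ : q₀ ∈ Δ := hsub (right_mem_segment ℝ p₀ q₀)
  have hwseg : w ∈ segment ℝ p₀ q₀ := openSegment_subset_segment ℝ p₀ q₀ hw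
  have hwΔ : w ∈ Δ := hsub hwseg
  have hκw : dotz η w = κ := hκeq w hwseg
  have hdR : (0:ℝ) < d := by exact_mod_cast hd
  have hkR : (0:ℝ) ≤ (k:ℝ) := Nat.cast_nonneg k
  have haR : (2:ℝ)*d ≤ a := by exact_mod_cast ha
  have hLR : (2:ℝ)*d ≤ L := by exact_mod_cast hL
  -- coordinates of the displaced point
  have hu0 : (d : ℝ) * ((k:ℝ) + 1) = w 0 + t * l 0 := by
    have := congrFun hu 0; simpa using this
  have hu1 : (d : ℝ) = w 1 + t * l 1 := by
    have := congrFun hu 1; simpa using this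
  -- a point beyond twice the displacement
  obtain ⟨s', hs'0, hs'Δ, hs'gt⟩ :
      ∃ s', 0 ≤ s' ∧ w + s' • (fun i => (l i : ℝ)) ∈ Δ ∧ 2 * t < s' := by
    by_contra h
    push_neg at h
    have : sSup {s : ℝ | 0 ≤ s ∧ w + s • (fun i => (l i : ℝ)) ∈ Δ} ≤ 2 * t :=
      Real.sSup_le (fun x hx => h x hx.1 hx.2) (by linarith)
    linarith
  have hs'pos : 0 < s' := by linarith
  have hQΔ : w + (2 * t) • (fun i => (l i : ℝ)) ∈ Δ := by
    have hb : 0 ≤ 2*t/s' := by positivity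
    have ha' : 0 ≤ 1 - 2*t/s' := by
      rw [sub_nonneg]; exact div_le_one_of_le₀ (le_of_lt hs'gt) hs'pos.le
    have hcomb := hΔconv hwΔ hs'Δ ha' hb (by ring)
    have heq : (1 - 2*t/s') • w + (2*t/s') • (w + s' • (fun i => (l i : ℝ)))
        = w + (2 * t) • (fun i => (l i : ℝ)) := by
      funext i
      simp only [Pi.add_apply, Pi.smul_apply, smul_eq_mul]
      field_simp
      ring
    rwa [heq] at hcomb
  -- half-plane constraints at w and Q
  have hw0 : 0 ≤ w 0 := hAB w hwΔ
  have hw1 : 0 ≤ w 1 := hBC w hwΔ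
  have hw3 : w 0 - (1 + 2*(k:ℝ)) * w 1 ≤ d := hCD w hwΔ
  have hQ0 : 0 ≤ w 0 + 2*t*(l 0) := by
    have := hAB _ hQΔ
    simpa using this
  have hQ1 : 0 ≤ w 1 + 2*t*(l 1) := by
    have := hBC _ hQΔ
    simpa using this
  have hQ3 : (w 0 + 2*t*(l 0)) - (1 + 2*(k:ℝ)) * (w 1 + 2*t*(l 1)) ≤ d := by
    have := hCD _ hQΔ
    simpa using this
  -- η ⬝ l = -1
  have hηlZ : l 0 * η 0 + l 1 * η 1 = -1 := by
    have habs : l 0 * η 0 + l 1 * η 1 = 1 ∨ l 0 * η 0 + l 1 * η 1 = -1 := by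
      have := (abs_eq (by norm_num : (0:ℤ) ≤ 1)).mp hlη
      rwa [Fin.sum_univ_two] at this
    rcases habs with h1 | h1
    · exfalso
      have hc := hκub _ hQΔ
      have hexp : dotz η (w + (2*t) • (fun i => (l i : ℝ)))
          = dotz η w + 2*t*((l 0 * η 0 + l 1 * η 1 : ℤ) : ℝ) := by
        simp only [dotz, Fin.sum_univ_two, Pi.add_apply, Pi.smul_apply, smul_eq_mul]
        push_cast
        ring
      rw [hexp, hκw, h1] at hc
      push_cast at hc
      linarith
    · exact h1
  -- w is not a vertex
  have hnotv : ∀ v : Fin 2 → ℝ, IsVertex Δ v → w ≠ v := by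
    intro v hv hwv
    have hmem : v ∈ openSegment ℝ p₀ q₀ := hwv ▸ hw
    have h2 := hv.2.2 hp₀Δ hq₀Δ (Set.mem_singleton v) hmem
    have h3 := hv.2.2 hq₀Δ hp₀Δ (Set.mem_singleton v) (by rwa [openSegment_symm] at hmem)
    exact hpq ((h2 : p₀ = v).trans (h3 : q₀ = v).symm)
  have hwB : ¬ (w 0 = 0 ∧ w 1 = 0) := by
    rintro ⟨h0, h1⟩
    exact hnotv _ hB (ext2' (by simpa using h0) (by simpa using h1))
  have hwC : ¬ (w 0 = (d:ℝ) ∧ w 1 = 0) := by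
    rintro ⟨h0, h1⟩
    exact hnotv _ hC (ext2' (by simpa using h0) (by simpa using h1))
  -- the quadrilateral B C (0,2d) (d+2d(1+2k),2d) is inside Δ
  have hRsub : ∀ x : Fin 2 → ℝ, 0 ≤ x 0 → 0 ≤ x 1 → x 1 ≤ 2*d →
      x 0 - (1 + 2*(k:ℝ)) * x 1 ≤ d → x ∈ Δ := by
    intro x hx0 hx1 hx2 hx3
    have hapos : (0:ℝ) < a := by linarith
    have hLpos : (0:ℝ) < L := by linarith
    have hya : x 1 / a ≤ 1 := by rw [div_le_one hapos]; linarith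
    have hyL : x 1 / L ≤ 1 := by rw [div_le_one hLpos]; linarith
    have hPl : (![0, x 1] : Fin 2 → ℝ) ∈ Δ := by
      have hcomb := hΔconv hB.1 hA.1 (a := 1 - x 1/a) (b := x 1/a)
        (by linarith) (by positivity) (by ring)
      have heq : (1 - x 1/a) • (![0, 0] : Fin 2 → ℝ) + (x 1/a) • (![0, (a:ℝ)] : Fin 2 → ℝ)
          = ![0, x 1] := by
        funext i; fin_cases i <;>
          simp only [Pi.add_apply, Pi.smul_apply, smul_eq_mul, Fin.zero_eta, Fin.mk_one, Matrix.cons_val_zero,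
            Matrix.cons_val_one, Matrix.head_cons] <;> field_simp <;> ring
      rwa [heq] at hcomb
    have hPr : (![(d:ℝ) + x 1 * (1 + 2*(k:ℝ)), x 1] : Fin 2 → ℝ) ∈ Δ := by
      have hcomb := hΔconv hC.1 hD.1 (a := 1 - x 1/L) (b := x 1/L)
        (by linarith) (by positivity) (by ring)
      have heq : (1 - x 1/L) • (![(d:ℝ), 0] : Fin 2 → ℝ)
          + (x 1/L) • (![(d:ℝ) + (L:ℝ) * (1 + 2*(k:ℝ)), (L:ℝ)] : Fin 2 → ℝ)
          = ![(d:ℝ) + x 1 * (1 + 2*(k:ℝ)), x 1] := by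
        funext i; fin_cases i <;>
          simp only [Pi.add_apply, Pi.smul_apply, smul_eq_mul, Fin.zero_eta, Fin.mk_one, Matrix.cons_val_zero,
            Matrix.cons_val_one, Matrix.head_cons] <;> field_simp <;> ring
      rwa [heq] at hcomb
    have hden : (0:ℝ) < d + x 1 * (1 + 2*(k:ℝ)) := by nlinarith
    have hμ0 : 0 ≤ x 0 / (d + x 1 * (1 + 2*(k:ℝ))) := by positivity
    have hμ1 : x 0 / (d + x 1 * (1 + 2*(k:ℝ))) ≤ 1 := by
      rw [div_le_one hden]; linarith
    have hcomb := hΔconv hPl hPr (a := 1 - x 0 / (d + x 1 * (1 + 2*(k:ℝ))))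
      (b := x 0 / (d + x 1 * (1 + 2*(k:ℝ)))) (by linarith) hμ0 (by ring)
    have heq : (1 - x 0 / (d + x 1 * (1 + 2*(k:ℝ)))) • (![0, x 1] : Fin 2 → ℝ)
        + (x 0 / (d + x 1 * (1 + 2*(k:ℝ)))) •
          (![(d:ℝ) + x 1 * (1 + 2*(k:ℝ)), x 1] : Fin 2 → ℝ) = x := by
      funext i; fin_cases i <;>
        simp only [Pi.add_apply, Pi.smul_apply, smul_eq_mul, Fin.zero_eta, Fin.mk_one, Matrix.cons_val_zero,
          Matrix.cons_val_one, Matrix.head_cons]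
      · field_simp; ring
      · field_simp; ring
    rwa [heq] at hcomb
  -- a generic way to contradict the probe length condition
  have hsup_le : ¬ (∀ s', 0 ≤ s' → w + s' • (fun i => (l i : ℝ)) ∈ Δ → s' ≤ 2*t) := by
    intro h
    have : sSup {s : ℝ | 0 ≤ s ∧ w + s • (fun i => (l i : ℝ)) ∈ Δ} ≤ 2 * t :=
      Real.sSup_le (fun x hx => h x hx.1 hx.2) (by linarith)
    linarith
  obtain ⟨μ, ν, hμ, hν, hμν, hcomb⟩ := id hw
  have hcomb0 : μ * p₀ 0 + ν * q₀ 0 = w 0 := by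
    have := congrFun hcomb 0; simpa using this
  have hcomb1 : μ * p₀ 1 + ν * q₀ 1 = w 1 := by
    have := congrFun hcomb 1; simpa using this
  have hκp : (η 0 : ℝ) * p₀ 0 + (η 1 : ℝ) * p₀ 1 = κ := by
    have := hκeq p₀ (left_mem_segment ℝ p₀ q₀)
    rwa [dotz, Fin.sum_univ_two] at this
  have hκq : (η 0 : ℝ) * q₀ 0 + (η 1 : ℝ) * q₀ 1 = κ := by
    have := hκeq q₀ (right_mem_segment ℝ p₀ q₀)
    rwa [dotz, Fin.sum_univ_two] at this
  have hκwc : (η 0 : ℝ) * w 0 + (η 1 : ℝ) * w 1 = κ := by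
    rw [← hκw, dotz, Fin.sum_univ_two]
  by_cases hcase1 : w 1 = 0
  · -- CASE (i): w on the bottom edge BC
    have hp1 : 0 ≤ p₀ 1 := hBC _ hp₀Δ
    have hq1 : 0 ≤ q₀ 1 := hBC _ hq₀Δ
    have hsum0 : μ * p₀ 1 + ν * q₀ 1 = 0 := by rw [hcomb1, hcase1]
    have hp10 : p₀ 1 = 0 := by
      have h1 : μ * p₀ 1 ≤ μ * 0 := by have := mul_nonneg hν.le hq1; linarith
      exact le_antisymm (le_of_mul_le_mul_left h1 hμ) hp1
    have hq10 : q₀ 1 = 0 := by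
      have h1 : ν * q₀ 1 ≤ ν * 0 := by have := mul_nonneg hμ.le hp1; linarith
      exact le_antisymm (le_of_mul_le_mul_left h1 hν) hq1
    have hne0 : p₀ 0 ≠ q₀ 0 := fun h => hpq (ext2' h (hp10.trans hq10.symm))
    have hα0 : η 0 = 0 := by
      have hmul : (η 0 : ℝ) * (p₀ 0 - q₀ 0) = 0 := by
        rw [hp10] at hκp; rw [hq10] at hκq; ring_nf; ring_nf at hκp hκq; linarith
      rcases mul_eq_zero.mp hmul with h | h
      · exact_mod_cast h
      · exact absurd (by linarith : p₀ 0 = q₀ 0) hne0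
    have hβ : η 1 = 1 ∨ η 1 = -1 := by
      refine Int.isUnit_iff.mp (hηprim.2 (η 1) ?_)
      intro i; fin_cases i
      · simp [hα0]
      · simp
    have hκ0 : κ = 0 := by rw [← hκwc, hα0, hcase1]; simp
    have hAκ := hκub _ hA.1
    have hAd : (η 1 : ℝ) * a ≤ 0 := by
      rw [dotz, Fin.sum_univ_two] at hAκ
      simp only [Matrix.cons_val_zero, Matrix.cons_val_one, Matrix.head_cons, mul_zero,
        hκ0] at hAκ
      simpa [hα0] using hAκ
    have hβ1 : η 1 = -1 := by
      rcases hβ with h | h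
      · exfalso; rw [h] at hAd; push_cast at hAd; linarith
      · exact h
    have hl1 : l 1 = 1 := by rw [hα0, hβ1] at hηlZ; omega
    have htd : t = d := by rw [hcase1, hl1] at hu1; push_cast at hu1; linarith
    have hw0d : w 0 ≤ d := by rw [hcase1] at hw3; linarith
    have hw0pos : 0 < w 0 := lt_of_le_of_ne hw0 (fun h => hwB ⟨h.symm, hcase1⟩)
    have hw0lt : w 0 < d := lt_of_le_of_ne hw0d (fun h => hwC ⟨h, hcase1⟩)
    have hw0eq : w 0 = (d:ℝ) * ((k:ℝ) + 1 - (l 0 : ℝ)) := by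
      rw [htd] at hu0; linear_combination -hu0
    have h1' : (0:ℤ) < d * ((k:ℤ) + 1 - l 0) := by
      have h1 : (0:ℝ) < (d:ℝ) * ((k:ℝ) + 1 - (l 0 : ℝ)) := hw0eq ▸ hw0pos
      exact_mod_cast h1
    have h2' : d * ((k:ℤ) + 1 - l 0) < d := by
      have h2 : (d:ℝ) * ((k:ℝ) + 1 - (l 0 : ℝ)) < d := hw0eq ▸ hw0lt
      exact_mod_cast h2
    have hc1 : 0 < (k:ℤ) + 1 - l 0 := by
      rcases mul_pos_iff.mp h1' with ⟨_, hc⟩ | ⟨hneg, _⟩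
      · exact hc
      · omega
    have := mul_le_mul_of_nonneg_left (by omega : (1:ℤ) ≤ (k:ℤ) + 1 - l 0) hd.le
    linarith
  by_cases hcase0 : w 0 = 0
  · -- CASE (ii): w on the edge AB
    have hp0 : 0 ≤ p₀ 0 := hAB _ hp₀Δ
    have hq0 : 0 ≤ q₀ 0 := hAB _ hq₀Δ
    have hsum0 : μ * p₀ 0 + ν * q₀ 0 = 0 := by rw [hcomb0, hcase0]
    have hp00 : p₀ 0 = 0 := by
      have h1 : μ * p₀ 0 ≤ μ * 0 := by have := mul_nonneg hν.le hq0; linarith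
      exact le_antisymm (le_of_mul_le_mul_left h1 hμ) hp0
    have hq00 : q₀ 0 = 0 := by
      have h1 : ν * q₀ 0 ≤ ν * 0 := by have := mul_nonneg hμ.le hp0; linarith
      exact le_antisymm (le_of_mul_le_mul_left h1 hν) hq0
    have hne1 : p₀ 1 ≠ q₀ 1 := fun h => hpq (ext2' (hp00.trans hq00.symm) h)
    have hβ0 : η 1 = 0 := by
      have hmul : (η 1 : ℝ) * (p₀ 1 - q₀ 1) = 0 := by
        rw [hp00] at hκp; rw [hq00] at hκq; ring_nf; ring_nf at hκp hκq; linarith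
      rcases mul_eq_zero.mp hmul with h | h
      · exact_mod_cast h
      · exact absurd (by linarith : p₀ 1 = q₀ 1) hne1
    have hα : η 0 = 1 ∨ η 0 = -1 := by
      refine Int.isUnit_iff.mp (hηprim.2 (η 0) ?_)
      intro i; fin_cases i
      · simp
      · simp [hβ0]
    have hκ0 : κ = 0 := by rw [← hκwc, hβ0, hcase0]; simp
    have hCκ := hκub _ hC.1
    have hCd : (η 0 : ℝ) * d ≤ 0 := by
      rw [dotz, Fin.sum_univ_two] at hCκ
      simp only [Matrix.cons_val_zero, Matrix.cons_val_one, Matrix.head_cons, mul_zero,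
        hκ0] at hCκ
      simpa [hβ0] using hCκ
    have hα1 : η 0 = -1 := by
      rcases hα with h | h
      · exfalso; rw [h] at hCd; push_cast at hCd; linarith
      · exact h
    have hl0 : l 0 = 1 := by rw [hα1, hβ0] at hηlZ; omega
    have htd : t = (d:ℝ) * ((k:ℝ) + 1) := by
      rw [hcase0, hl0] at hu0; push_cast at hu0; linarith
    have hw1pos : 0 < w 1 := lt_of_le_of_ne hw1 (Ne.symm hcase1)
    have hq_leR : ((k:ℝ) + 1) * (l 1 : ℝ) < 1 := by
      have hr : (d:ℝ) * (((k:ℝ) + 1) * (l 1 : ℝ)) < (d:ℝ) * 1 := by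
        rw [htd] at hu1
        linarith [hw1pos, hu1]
      exact (mul_lt_mul_iff_right₀ hdR).mp hr
    have hq_le : l 1 ≤ 0 := by
      by_contra h
      push_neg at h
      have h1 : (1:ℤ) * 1 ≤ ((k:ℤ) + 1) * l 1 :=
        mul_le_mul (by omega) h (by norm_num) (by omega)
      have h2 : ((k:ℝ) + 1) * (l 1 : ℝ) < 1 := hq_leR
      have h3 : ((1:ℤ) * 1 : ℤ) ≤ (((k:ℤ) + 1) * l 1 : ℤ) := h1
      have h4 : ((((k:ℤ) + 1) * l 1 : ℤ) : ℝ) = ((k:ℝ) + 1) * (l 1 : ℝ) := by push_cast; ring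
      have h5 : (1:ℝ) ≤ ((k:ℝ) + 1) * (l 1 : ℝ) := by
        rw [← h4]; exact_mod_cast h3
      linarith
    have hl1R : (l 1 : ℝ) ≤ 0 := by exact_mod_cast hq_le
    have hw1eq : w 1 = (d:ℝ) - (d:ℝ) * ((k:ℝ) + 1) * (l 1 : ℝ) := by
      rw [htd] at hu1; linarith
    refine hsup_le ?_
    intro s' hs0' hsΔ'
    have h3 := hCD _ hsΔ'
    simp only [Pi.add_apply, Pi.smul_apply, smul_eq_mul] at h3
    rw [hcase0, hl0] at h3
    push_cast at h3
    have hprod : 0 ≤ (d:ℝ) * ((k:ℝ) + 1) * (1 + 2*(k:ℝ)) * (-(l 1 : ℝ)) :=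
      mul_nonneg (mul_nonneg (mul_nonneg hdR.le (by linarith)) (by linarith)) (by linarith)
    have hb : (d:ℝ) + (1 + 2*(k:ℝ)) * w 1
        ≤ 2 * ((d:ℝ) * ((k:ℝ) + 1)) * (1 - (1 + 2*(k:ℝ)) * (l 1 : ℝ)) := by
      rw [hw1eq]; linarith [hprod]
    have hcpos : (0:ℝ) < 1 - (1 + 2*(k:ℝ)) * (l 1 : ℝ) := by
      linarith [mul_nonneg (by linarith : (0:ℝ) ≤ 1 + 2*(k:ℝ)) (by linarith : (0:ℝ) ≤ -(l 1:ℝ))]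
    have hkey : s' * (1 - (1 + 2*(k:ℝ)) * (l 1 : ℝ))
        ≤ (2 * t) * (1 - (1 + 2*(k:ℝ)) * (l 1 : ℝ)) := by
      rw [htd]
      linarith [h3, hb]
    exact le_of_mul_le_mul_right hkey hcpos
  by_cases hcase3 : w 0 - (1 + 2*(k:ℝ)) * w 1 = (d:ℝ)
  · -- CASE (iii): w on the line of the edge CD
    have hp3 := hCD _ hp₀Δ
    have hq3 := hCD _ hq₀Δ
    have hsum : μ * (p₀ 0 - (1 + 2*(k:ℝ))*p₀ 1 - d) + ν * (q₀ 0 - (1 + 2*(k:ℝ))*q₀ 1 - d)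
        = 0 := by
      linear_combination hcomb0 - (1 + 2*(k:ℝ))*hcomb1 - (d:ℝ)*hμν + hcase3
    have hp3e : p₀ 0 - (1 + 2*(k:ℝ)) * p₀ 1 = (d:ℝ) := by
      by_contra h
      have hlt : p₀ 0 - (1 + 2*(k:ℝ))*p₀ 1 - d < 0 := lt_of_le_of_ne (by linarith) (by
        intro h'; exact h (by linarith))
      have h1 : μ * (p₀ 0 - (1 + 2*(k:ℝ))*p₀ 1 - d) < 0 := mul_neg_of_pos_of_neg hμ hlt
      have h2 : ν * (q₀ 0 - (1 + 2*(k:ℝ))*q₀ 1 - d) ≤ 0 :=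
        mul_nonpos_of_nonneg_of_nonpos hν.le (by linarith)
      linarith
    have hq3e : q₀ 0 - (1 + 2*(k:ℝ)) * q₀ 1 = (d:ℝ) := by
      by_contra h
      have hlt : q₀ 0 - (1 + 2*(k:ℝ))*q₀ 1 - d < 0 := lt_of_le_of_ne (by linarith) (by
        intro h'; exact h (by linarith))
      have h1 : ν * (q₀ 0 - (1 + 2*(k:ℝ))*q₀ 1 - d) < 0 := mul_neg_of_pos_of_neg hν hlt
      have h2 : μ * (p₀ 0 - (1 + 2*(k:ℝ))*p₀ 1 - d) ≤ 0 :=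
        mul_nonpos_of_nonneg_of_nonpos hμ.le (by linarith)
      linarith
    have hp00 : p₀ 0 = (d:ℝ) + (1 + 2*(k:ℝ)) * p₀ 1 := by linarith
    have hq00 : q₀ 0 = (d:ℝ) + (1 + 2*(k:ℝ)) * q₀ 1 := by linarith
    have hne1 : p₀ 1 ≠ q₀ 1 := by
      intro h
      exact hpq (ext2' (by rw [hp00, hq00, h]) h)
    have hmul : ((η 0 : ℝ) * (1 + 2*(k:ℝ)) + (η 1 : ℝ)) * (p₀ 1 - q₀ 1) = 0 := by
      linear_combination hκp - hκq - (η 0 : ℝ)*hp00 + (η 0 : ℝ)*hq00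
    have hrelR : (η 0 : ℝ) * (1 + 2*(k:ℝ)) + (η 1 : ℝ) = 0 := by
      rcases mul_eq_zero.mp hmul with h | h
      · exact h
      · exact absurd (by linarith : p₀ 1 = q₀ 1) hne1
    have hrelZ : η 0 * (1 + 2*(k:ℤ)) + η 1 = 0 := by exact_mod_cast hrelR
    have hdvd : η 0 ∣ η 1 := ⟨-(1 + 2*(k:ℤ)), by linear_combination hrelZ⟩
    have hα : η 0 = 1 ∨ η 0 = -1 := by
      refine Int.isUnit_iff.mp (hηprim.2 (η 0) ?_)
      intro i; fin_cases i
      · simp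
      · simpa using hdvd
    have hκd : κ = (η 0 : ℝ) * d := by
      rw [← hκwc]; linear_combination (w 1)*hrelR + (η 0 : ℝ)*hcase3
    have hBκ := hκub _ hB.1
    have hBle : (0:ℝ) ≤ κ := by
      rw [dotz, Fin.sum_univ_two] at hBκ
      simpa using hBκ
    have hα1 : η 0 = 1 := by
      rcases hα with h | h
      · exact h
      · exfalso; rw [h] at hκd; push_cast at hκd; linarith
    have hβv : η 1 = -(1 + 2*(k:ℤ)) := by rw [hα1] at hrelZ; linarith
    have hl0eq : l 0 = (1 + 2*(k:ℤ)) * l 1 - 1 := by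
      rw [hα1, hβv] at hηlZ
      linarith [hηlZ]
    have hl0R : (l 0 : ℝ) = (1 + 2*(k:ℝ)) * (l 1 : ℝ) - 1 := by
      exact_mod_cast hl0eq
    have htd : t = (d:ℝ) * ((k:ℝ) + 1) := by
      linear_combination hcase3 + hu0 - (1 + 2*(k:ℝ))*hu1 + t*hl0R
    have hq_leR : (d:ℝ) * (((k:ℝ) + 1) * (l 1 : ℝ)) ≤ (d:ℝ) * 1 := by
      rw [htd] at hu1
      linarith [hw1, hu1]
    have hq_le : ((k:ℤ) + 1) * l 1 ≤ 1 := by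
      have := (mul_le_mul_iff_right₀ hdR).mp hq_leR
      exact_mod_cast this
    rcases le_or_gt (l 1) 0 with hq | hq
    · -- probe direction points left; bounded by the edge AB
      have hprod0 : (1 + 2*(k:ℤ)) * l 1 ≤ 0 :=
        mul_nonpos_of_nonneg_of_nonpos (by omega) hq
      have hl0neg : l 0 ≤ -1 := by linarith [hl0eq, hprod0]
      have hl0Rneg : (l 0 : ℝ) ≤ -1 := by exact_mod_cast hl0neg
      have hb2 : w 0 ≤ 2*t*(-(l 0 : ℝ)) := by
        have hprod : 0 ≤ (d:ℝ) * ((k:ℝ) + 1) * (-(1 + (l 0:ℝ))) :=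
          mul_nonneg (mul_nonneg hdR.le (by linarith)) (by linarith)
        rw [htd] at hu0 ⊢
        linarith [hu0, hprod]
      refine hsup_le ?_
      intro s' hs0' hsΔ'
      have h0 := hAB _ hsΔ'
      simp only [Pi.add_apply, Pi.smul_apply, smul_eq_mul] at h0
      have hkey : s' * (-(l 0 : ℝ)) ≤ (2 * t) * (-(l 0 : ℝ)) := by
        linarith [h0, hb2]
      exact le_of_mul_le_mul_right hkey (by linarith)
    · -- probe direction points right: forces k = 0, w = C, impossible
      have hk1 : (k:ℤ) + 1 ≤ ((k:ℤ) + 1) * l 1 :=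
        le_mul_of_one_le_right (by omega) hq
      have hk0 : k = 0 := by omega
      have hl1 : l 1 = 1 := by
        have : ((k:ℤ) + 1) * l 1 ≤ 1 := hq_le
        rw [hk0] at this
        push_cast at this
        omega
      apply hcase1
      rw [htd, hl1, hk0] at hu1
      push_cast at hu1
      linarith
  by_cases hcase2d : w 1 = 2*(d:ℝ)
  · -- CASE (v): Q is on the bottom edge; probe length is capped by x₁ ≥ 0
    have htl1 : t * (l 1 : ℝ) = -(d:ℝ) := by rw [hcase2d] at hu1; linarith
    have hl1neg : (l 1 : ℝ) < 0 := by
      by_contra h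
      push_neg at h
      have := mul_nonneg ht.le h
      linarith
    refine hsup_le ?_
    intro s' hs0' hsΔ'
    have h1 := hBC _ hsΔ'
    simp only [Pi.add_apply, Pi.smul_apply, smul_eq_mul] at h1
    rw [hcase2d] at h1
    have hkey : s' * (-(l 1 : ℝ)) ≤ (2 * t) * (-(l 1 : ℝ)) := by
      linarith [h1, htl1]
    exact le_of_mul_le_mul_right hkey (by linarith)
  · -- CASE (iv): w is in the interior of Δ, impossible for a supporting line
    have hw0pos : 0 < w 0 := lt_of_le_of_ne hw0 (Ne.symm hcase0)
    have hw1pos : 0 < w 1 := lt_of_le_of_ne hw1 (Ne.symm hcase1)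
    have hw3lt : w 0 - (1 + 2*(k:ℝ)) * w 1 < (d:ℝ) := lt_of_le_of_ne hw3 hcase3
    have hw1le : w 1 ≤ 2*(d:ℝ) := by linarith [hQ1, hu1]
    have hw1lt : w 1 < 2*(d:ℝ) := lt_of_le_of_ne hw1le hcase2d
    set e3 : ℝ := (d:ℝ) - (w 0 - (1 + 2*(k:ℝ)) * w 1) with he3
    have he3pos : 0 < e3 := by rw [he3]; linarith
    have hkden : (0:ℝ) < 1 + 2*(k:ℝ) := by linarith
    set δ : ℝ := min (min (w 0) (w 1)) (min (2*(d:ℝ) - w 1) (e3 / (1 + 2*(k:ℝ)))) with hδ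
    have hδpos : 0 < δ := by
      rw [hδ]
      exact lt_min (lt_min hw0pos hw1pos) (lt_min (by linarith) (div_pos he3pos hkden))
    have hδ1 : δ ≤ w 0 := le_trans (min_le_left _ _) (min_le_left _ _)
    have hδ2 : δ ≤ w 1 := le_trans (min_le_left _ _) (min_le_right _ _)
    have hδ3 : δ ≤ 2*(d:ℝ) - w 1 := le_trans (min_le_right _ _) (min_le_left _ _)
    have hδ4' : δ ≤ e3 / (1 + 2*(k:ℝ)) := le_trans (min_le_right _ _) (min_le_right _ _)
    have hδ4 : δ * (1 + 2*(k:ℝ)) ≤ e3 := (le_div_iff₀ hkden).mp hδ4'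
    have hδ5 : δ ≤ e3 := by nlinarith [mul_nonneg hδpos.le (by linarith : (0:ℝ) ≤ 2*(k:ℝ))]
    have hz1 : (![w 0 + δ, w 1] : Fin 2 → ℝ) ∈ Δ := by
      refine hRsub _ ?_ ?_ ?_ ?_ <;>
        simp only [Matrix.cons_val_zero, Matrix.cons_val_one, Matrix.head_cons]
      · linarith
      · linarith
      · linarith
      · rw [he3] at hδ5; linarith
    have hz2 : (![w 0 - δ, w 1] : Fin 2 → ℝ) ∈ Δ := by
      refine hRsub _ ?_ ?_ ?_ ?_ <;>
        simp only [Matrix.cons_val_zero, Matrix.cons_val_one, Matrix.head_cons]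
      · linarith
      · linarith
      · linarith
      · linarith
    have hz3 : (![w 0, w 1 + δ] : Fin 2 → ℝ) ∈ Δ := by
      refine hRsub _ ?_ ?_ ?_ ?_ <;>
        simp only [Matrix.cons_val_zero, Matrix.cons_val_one, Matrix.head_cons]
      · linarith
      · linarith
      · linarith
      · nlinarith [mul_nonneg hδpos.le hkden.le]
    have hz4 : (![w 0, w 1 - δ] : Fin 2 → ℝ) ∈ Δ := by
      refine hRsub _ ?_ ?_ ?_ ?_ <;>
        simp only [Matrix.cons_val_zero, Matrix.cons_val_one, Matrix.head_cons]
      · linarith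
      · linarith
      · linarith
      · rw [he3] at hδ4; nlinarith [hδ4]
    have hd1 := hκub _ hz1
    have hd2 := hκub _ hz2
    have hd3 := hκub _ hz3
    have hd4 := hκub _ hz4
    rw [dotz, Fin.sum_univ_two] at hd1 hd2 hd3 hd4
    simp only [Matrix.cons_val_zero, Matrix.cons_val_one, Matrix.head_cons] at hd1 hd2 hd3 hd4
    have hη0R : (η 0 : ℝ) * δ = 0 := le_antisymm (by linarith [hd1, hκwc]) (by linarith [hd2, hκwc])
    have hη1R : (η 1 : ℝ) * δ = 0 := le_antisymm (by linarith [hd3, hκwc]) (by linarith [hd4, hκwc])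
    have hη0 : η 0 = 0 := by
      have : (η 0 : ℝ) = 0 := by
        rcases mul_eq_zero.mp hη0R with h | h
        · exact h
        · exact absurd h (ne_of_gt hδpos)
      exact_mod_cast this
    have hη1 : η 1 = 0 := by
      have : (η 1 : ℝ) = 0 := by
        rcases mul_eq_zero.mp hη1R with h | h
        · exact h
        · exact absurd h (ne_of_gt hδpos)
      exact_mod_cast this
    exact hηprim.1 (funext fun i => by fin_cases i <;> simp [hη0, hη1])
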